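/- Let X, Y be sets and c : X × Y → ℝ ∪ {+∞} a cost function. Every c-path-bounded set Γ ⊆ X × Y is c-cyclically monotone. -/

import Mathlib

/-- A set `Γ ⊆ X × Y` is `c`-cyclically monotone, for a cost `c : X × Y → ℝ ∪ {+∞}`. -/
def CCyclicallyMonotone {X Y : Type*} (c : X → Y → EReal) (Γ : Set (X × Y)) : Prop :=
  ∀ (k : ℕ) (p : Fin k → X × Y), (∀ i, p i ∈ Γ) →
    ∀ σ : Equiv.Perm (Fin k),
      ∑ i, c (p i).1 (p i).2 ≤ ∑ i, c (p i).1 (p (σ i)).2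

/-- The sum `c(x,y) − c(x₁,y) + ∑_{i=1}^{m−1} (c(xᵢ,yᵢ) − c(x_{i+1},yᵢ)) + c(x_m,y_m) − c(z,y_m)`
along a path `f` (with `m+1` intermediate points) from `p = (x,y)` to `q = (z,w)`. -/
noncomputable def pathSum {X Y : Type*} (c : X → Y → EReal) (p q : X × Y) {m : ℕ}
    (f : Fin (m + 1) → X × Y) : EReal :=
  (c p.1 p.2 - c (f 0).1 p.2)
    + ∑ i : Fin m, (c (f i.castSucc).1 (f i.castSucc).2 - c (f i.succ).1 (f i.castSucc).2)
    + (c (f (Fin.last m)).1 (f (Fin.last m)).2 - c q.1 (f (Fin.last m)).2)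

/-- A set `Γ ⊆ X × Y` is `c`-path-bounded. -/
def CPathBounded {X Y : Type*} (c : X → Y → EReal) (Γ : Set (X × Y)) : Prop :=
  (∀ p ∈ Γ, c p.1 p.2 < ⊤) ∧
    ∀ p ∈ Γ, ∀ q ∈ Γ, ∃ M : ℝ, ∀ (m : ℕ) (f : Fin (m + 1) → X × Y),
      (∀ i, f i ∈ Γ) → pathSum c p q f ≤ (M : EReal)

/-!
Suppose `∑ c(xᵢ, yᵢ) > ∑ c(x_{τ i}, yᵢ)` for points `pᵢ = (xᵢ, yᵢ) ∈ Γ` and a permutation `τ`.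
Then the gains `c(xᵢ, yᵢ) - c(x_{τ i}, yᵢ)` have positive total, so their sum along one period
of the `τ`-orbit of some `i` is positive. Going around that orbit `N` times is a path from `pᵢ`
back to itself whose path sum is `N` times this gain, which is unbounded in `N`.
On `Γ` the cost is `< ⊤`; it is `> ⊥` at the `pᵢ` since their total exceeds another sum, and
`c(x_{τ i}, yᵢ) > ⊥` because otherwise the two-point path `pᵢ, p_{τ i}` would have sum `⊤`.
-/

open Finset

theorem Function.Periodic.sum_range_mul {M : Type*} [AddCommMonoid M] {f : ℕ → M} {n : ℕ}
    (hf : Function.Periodic f n) (N : ℕ) :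
    ∑ j ∈ range (N * n), f j = N • ∑ j ∈ range n, f j := by
  induction N with
  | zero => simp
  | succ N ih =>
    rw [Nat.succ_mul, sum_range_add, ih, succ_nsmul]
    congr 1
    refine sum_congr rfl fun j _ => ?_
    rw [add_comm]
    exact hf.nat_mul N j

theorem Equiv.Perm.exists_sum_range_pow_apply_pos {ι M : Type*} [Fintype ι] [AddCommMonoid M]
    [LinearOrder M] [IsOrderedAddMonoid M] (τ : Equiv.Perm ι) {n : ℕ} (hn : n ≠ 0) {t : ι → M}
    (ht : 0 < ∑ i, t i) : ∃ i, 0 < ∑ j ∈ range n, t ((τ ^ j) i) := by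
  by_contra! hle
  have hsum : ∑ i, ∑ j ∈ range n, t ((τ ^ j) i) = n • ∑ i, t i := by
    rw [sum_comm]
    simp only [Equiv.sum_comp, sum_const, card_range]
  have hnonpos := sum_nonpos fun i (_ : i ∈ univ) => hle i
  rw [hsum] at hnonpos
  exact (ht.trans_le (le_self_nsmul ht.le hn)).not_ge hnonpos

theorem EReal.exists_lt_nsmul {a : EReal} (ha : 0 < a) (b : ℝ) :
    ∃ N : ℕ, (b : EReal) < N • a := by
  induction a using EReal.rec with
  | bot => exact absurd ha not_lt_bot
  | top => exact ⟨1, by simp⟩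
  | coe r =>
    obtain ⟨N, hN⟩ := _root_.exists_lt_nsmul (EReal.coe_pos.mp ha) b
    exact ⟨N, by rw [← EReal.coe_nsmul]; exact_mod_cast hN⟩

theorem EReal.sum_sub_pos_of_sum_lt {ι : Type*} {s : Finset ι} {a b : ι → EReal}
    (hb : ∀ i ∈ s, b i ≠ ⊥) (h : ∑ i ∈ s, b i < ∑ i ∈ s, a i) : 0 < ∑ i ∈ s, (a i - b i) := by
  classical
  by_contra! hle
  have hb_top : ∀ i ∈ s, b i ≠ ⊤ := by
    intro i hi hbi
    have hrest : ∑ j ∈ s.erase i, b j ≠ ⊥ := fun hbot =>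
      let ⟨j, hj, hbj⟩ := WithBot.sum_eq_bot_iff.mp hbot
      hb j (mem_of_mem_erase hj) hbj
    have hsum_top : ∑ j ∈ s, b j = ⊤ := by
      rw [← add_sum_erase _ _ hi, hbi, EReal.top_add_of_ne_bot hrest]
    exact (h.trans_le le_top).ne hsum_top
  refine h.not_ge ?_
  calc ∑ i ∈ s, a i = ∑ i ∈ s, ((a i - b i) + b i) := by
        refine sum_congr rfl fun i hi => ?_
        rw [← EReal.coe_toReal (hb_top i hi) (hb i hi), EReal.sub_add_cancel]
    _ = ∑ i ∈ s, (a i - b i) + ∑ i ∈ s, b i := sum_add_distrib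
    _ ≤ ∑ i ∈ s, b i := by simpa using add_le_add_left hle (∑ i ∈ s, b i)

section

variable {X Y : Type*} {c : X → Y → EReal} {Γ : Set (X × Y)}

theorem pathSum_eq_sum {p q : X × Y} {m : ℕ} {f : Fin (m + 1) → X × Y} (hf₀ : f 0 = p)
    (hf : f (Fin.last m) = q) (hp_top : c p.1 p.2 ≠ ⊤) (hp_bot : c p.1 p.2 ≠ ⊥)
    (hq_top : c q.1 q.2 ≠ ⊤) (hq_bot : c q.1 q.2 ≠ ⊥) :
    pathSum c p q f =
      ∑ i : Fin m, (c (f i.castSucc).1 (f i.castSucc).2 - c (f i.succ).1 (f i.castSucc).2) := by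
  rw [pathSum, hf₀, hf, EReal.sub_self hp_top hp_bot, EReal.sub_self hq_top hq_bot, zero_add,
    add_zero]

theorem CPathBounded.apply_ne_bot (h : CPathBounded c Γ) {p q : X × Y} (hp : p ∈ Γ) (hq : q ∈ Γ)
    (hp_bot : c p.1 p.2 ≠ ⊥) (hq_bot : c q.1 q.2 ≠ ⊥) : c q.1 p.2 ≠ ⊥ := by
  intro hqp
  obtain ⟨M, hM⟩ := h.2 p hp q hq
  have hpath : pathSum c p q ![p, q] = ⊤ := by
    rw [pathSum_eq_sum (p := p) (q := q) (f := ![p, q]) rfl rfl (h.1 p hp).ne hp_bot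
      (h.1 q hq).ne hq_bot, Fin.sum_univ_one]
    simpa [hqp] using EReal.sub_bot hp_bot
  have hbound := hM 1 ![p, q] (by simp [Fin.forall_fin_two, hp, hq])
  rw [hpath] at hbound
  exact (EReal.coe_lt_top M).not_ge hbound

theorem CPathBounded.sum_range_nonpos_of_periodic (h : CPathBounded c Γ) {u : ℕ → X × Y}
    {n : ℕ} (hu : ∀ j, u j ∈ Γ) (hper : Function.Periodic u n) :
    ∑ j ∈ range n, (c (u j).1 (u j).2 - c (u (j + 1)).1 (u j).2) ≤ 0 := by
  by_contra! hpos
  have hn : n ≠ 0 := by rintro rfl; simp at hpos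
  have hu_bot : c (u 0).1 (u 0).2 ≠ ⊥ := by
    intro hbot
    refine not_lt_bot (hpos.trans_eq
      (WithBot.sum_eq_bot_iff.mpr ⟨0, mem_range.mpr (Nat.pos_of_ne_zero hn), ?_⟩))
    exact (congrArg (· - _) hbot).trans (EReal.bot_sub _)
  obtain ⟨M, hM⟩ := h.2 (u 0) (hu 0) (u 0) (hu 0)
  obtain ⟨N, hN⟩ := EReal.exists_lt_nsmul hpos M
  refine hN.not_ge ?_
  have hstep : Function.Periodic (fun j => c (u j).1 (u j).2 - c (u (j + 1)).1 (u j).2) n := by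
    intro j
    dsimp only
    rw [add_right_comm, hper j, hper (j + 1)]
  have hloop := hM (N * n) (fun j => u j) (fun j => hu j)
  rw [pathSum_eq_sum (p := u 0) (by simp) (hper.nat_mul_eq N) (h.1 _ (hu 0)).ne hu_bot
    (h.1 _ (hu 0)).ne hu_bot] at hloop
  simp only [Fin.val_castSucc, Fin.val_succ] at hloop
  rwa [Fin.sum_univ_eq_sum_range (fun j => c (u j).1 (u j).2 - c (u (j + 1)).1 (u j).2),
    hstep.sum_range_mul] at hloop

end

/-- Every `c`-path-bounded set is `c`-cyclically monotone. -/
theorem cCyclicallyMonotone_of_cPathBounded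
    {X Y : Type*} (c : X → Y → EReal) (Γ : Set (X × Y))
    (h : CPathBounded c Γ) : CCyclicallyMonotone c Γ := by
  intro k p hp σ
  by_contra! hlt
  set τ := σ⁻¹
  have hperm : ∑ i, c (p i).1 (p (σ i)).2 = ∑ i, c (p (τ i)).1 (p i).2 :=
    (Equiv.sum_comp τ _).symm.trans (by simp [τ])
  rw [hperm] at hlt
  have hd : ∀ i, c (p i).1 (p i).2 ≠ ⊥ := fun i hi =>
    not_lt_bot (hlt.trans_eq (WithBot.sum_eq_bot_iff.mpr ⟨i, mem_univ i, hi⟩))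
  have he : ∀ i ∈ univ, c (p (τ i)).1 (p i).2 ≠ ⊥ := fun i _ =>
    h.apply_ne_bot (hp i) (hp (τ i)) (hd i) (hd (τ i))
  obtain ⟨i, hi⟩ :=
    τ.exists_sum_range_pow_apply_pos (orderOf_pos τ).ne' (EReal.sum_sub_pos_of_sum_lt he hlt)
  refine hi.not_ge ?_
  have hper : Function.Periodic (fun j => p ((τ ^ j) i)) (orderOf τ) := fun j => by
    simp [pow_add, pow_orderOf_eq_one]
  simpa only [pow_succ', Equiv.Perm.mul_apply] using
    h.sum_range_nonpos_of_periodic (fun j => hp _) hper
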